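/- Let m = 2n be even and let φ(t) = 1 + ∑_{k=1}^{n-1} c_k cos(2πkt) be a real trigonometric polynomial of degree < n satisfying φ(j/m) ≥ 0 for all integers j. Then c_1 ≤ 1 + cos(π/n). -/

import Mathlib

/-!
Pair `φ` on the grid `t_j = j / 2n` against the nonnegative weight
`μ(t) = (1 + cos (π/n))/2 - cos (2πt) + (1 - cos (π/n))/2 · cos (2πnt)`.
On this grid `∑_j cos (2πr t_j)` vanishes for `0 < |r| < 2n`, and `μ φ` only has such frequencies
besides `0`, so `∑_j μ(t_j) φ(t_j) = n (1 + cos (π/n)) - n c₁`, which is `≥ 0` termwise.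
-/

open Real Finset

lemma sum_range_cos_two_pi_mul_eq_zero {N : ℕ} {r : ℤ} (hr : ¬ (N : ℤ) ∣ r) :
    ∑ j ∈ range N, cos (2 * π * r * (j / N)) = 0 := by
  obtain rfl | hN := eq_or_ne N 0
  · simp
  set ω : ℂ := Complex.exp (2 * π * Complex.I / N)
  have hω : IsPrimitiveRoot ω N := Complex.isPrimitiveRoot_exp N hN
  have hζ1 : ω ^ r ≠ 1 := fun h => hr ((hω.zpow_eq_one_iff_dvd r).mp h)
  have hζN : (ω ^ r) ^ N = 1 := by
    rw [← zpow_natCast, ← zpow_mul, mul_comm, zpow_mul, zpow_natCast, hω.pow_eq_one, one_zpow]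
  have hre (j : ℕ) : ((ω ^ r) ^ j).re = cos (2 * π * r * (j / N)) := by
    rw [← Complex.exp_int_mul, ← Complex.exp_nat_mul, ← Complex.exp_ofReal_mul_I_re]
    congr 2
    push_cast
    ring
  rw [← sum_congr rfl fun j _ => hre j, ← Complex.re_sum, geom_sum_eq hζ1, hζN]
  simp

lemma sum_range_cos_two_pi_mul_of_abs_lt {N : ℕ} {r : ℤ} (hr : |r| < N) :
    ∑ j ∈ range N, cos (2 * π * r * (j / N)) = if r = 0 then (N : ℝ) else 0 := by
  split_ifs with h
  · simp [h]
  · exact sum_range_cos_two_pi_mul_eq_zero fun hdvd => h (Int.eq_zero_of_abs_lt_dvd hdvd hr)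

lemma cos_two_pi_mul_mul_cos_two_pi_mul (a b t : ℝ) :
    cos (2 * π * a * t) * cos (2 * π * b * t) =
      (cos (2 * π * (a + b) * t) + cos (2 * π * (a - b) * t)) / 2 := by
  rw [show 2 * π * (a + b) * t = 2 * π * a * t + 2 * π * b * t by ring,
    show 2 * π * (a - b) * t = 2 * π * a * t - 2 * π * b * t by ring, cos_add, cos_sub]
  ring

lemma cos_pi_mul_div_le_cos_pi_div {n j : ℕ} (hj₀ : j ≠ 0) (hj : j < 2 * n) :
    cos (π * j / n) ≤ cos (π / n) := by
  have hn : (0 : ℝ) < n := by exact_mod_cast (by omega : 0 < n)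
  have of_le {i : ℕ} (hi₀ : i ≠ 0) (hi : i ≤ n) : cos (π * i / n) ≤ cos (π / n) := by
    have hi₁ : (1 : ℝ) ≤ i := by exact_mod_cast Nat.one_le_iff_ne_zero.mpr hi₀
    have hin : (i : ℝ) ≤ n := by exact_mod_cast hi
    apply cos_le_cos_of_nonneg_of_le_pi (by positivity)
    · rw [div_le_iff₀ hn]; nlinarith [pi_pos]
    · gcongr; exact le_mul_of_one_le_right pi_pos.le hi₁
  obtain hjn | hnj := le_or_gt j n
  · exact of_le hj₀ hjn
  · have hsymm : cos (π * j / n) = cos (π * (2 * n - j : ℕ) / n) := by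
      rw [← cos_nat_mul_two_pi_sub (π * j / n) 1]
      congr 1
      rw [Nat.cast_sub hj.le]
      field_simp
      push_cast
      ring
    rw [hsymm]
    exact of_le (by omega) (by omega)

/-- `cos (2πn t_j) = (-1)^j`, so on the grid the weight is `1 - cos (πj/n)` at even `j` and
`cos (π/n) - cos (πj/n)` at odd `j`. -/
noncomputable def fejerWeight (n : ℕ) (t : ℝ) : ℝ :=
  (1 + cos (π / n)) / 2 - cos (2 * π * 1 * t) + (1 - cos (π / n)) / 2 * cos (2 * π * n * t)

lemma fejerWeight_nonneg {n j : ℕ} (hj : j < 2 * n) : 0 ≤ fejerWeight n (j / (2 * n)) := by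
  have hn : (n : ℝ) ≠ 0 := by exact_mod_cast (by omega : n ≠ 0)
  have h₁ : cos (2 * π * 1 * (j / (2 * n))) = cos (π * j / n) := by
    congr 1; field_simp
  have hₙ : cos (2 * π * n * (j / (2 * n))) = (-1) ^ j := by
    rw [← cos_nat_mul_pi]; congr 1; field_simp
  rw [fejerWeight, h₁, hₙ]
  obtain hev | hodd := Nat.even_or_odd j
  · rw [hev.neg_one_pow]
    linarith [cos_le_one (π * j / n)]
  · rw [hodd.neg_one_pow]
    linarith [cos_pi_mul_div_le_cos_pi_div (n := n) (j := j) (by rintro rfl; simp at hodd) hj]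

lemma sum_fejerWeight_mul_cos {n k : ℕ} (hk : k < n) :
    ∑ j ∈ range (2 * n), fejerWeight n (j / (2 * n)) * cos (2 * π * k * (j / (2 * n))) =
      (if k = 0 then n * (1 + cos (π / n)) else 0) - if k = 1 then (n : ℝ) else 0 := by
  have grid (r : ℤ) (hr₁ : -(2 * n) < r) (hr₂ : r < 2 * n) :
      ∑ j ∈ range (2 * n), cos (2 * π * r * (j / (2 * n))) = if r = 0 then 2 * (n : ℝ) else 0 := by
    have := sum_range_cos_two_pi_mul_of_abs_lt (N := 2 * n) (r := r) (abs_lt.mpr ⟨hr₁, hr₂⟩)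
    push_cast at this
    exact this
  have expand (t : ℝ) : fejerWeight n t * cos (2 * π * k * t) =
      (1 + cos (π / n)) / 2 * cos (2 * π * k * t)
        - (cos (2 * π * (1 + k) * t) + cos (2 * π * (1 - k) * t)) / 2
        + (1 - cos (π / n)) / 2 * ((cos (2 * π * (n + k) * t) + cos (2 * π * (n - k) * t)) / 2) := by
    rw [fejerWeight, ← cos_two_pi_mul_mul_cos_two_pi_mul, ← cos_two_pi_mul_mul_cos_two_pi_mul]
    ring
  simp only [expand, sum_add_distrib, sum_sub_distrib, ← mul_sum, ← sum_div]
  have e₀ := grid k (by omega) (by omega)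
  have e₁ := grid (1 + k) (by omega) (by omega)
  have e₂ := grid (1 - k) (by omega) (by omega)
  have e₃ := grid (n + k) (by omega) (by omega)
  have e₄ := grid (n - k) (by omega) (by omega)
  push_cast at e₀ e₁ e₂ e₃ e₄
  rw [e₀, e₁, e₂, e₃, e₄]
  split_ifs <;> first | omega | ring

lemma sum_fejerWeight_mul_trigPoly {n : ℕ} (hn : 2 ≤ n) (c : ℕ → ℝ) :
    ∑ j ∈ range (2 * n), fejerWeight n (j / (2 * n)) *
        (1 + ∑ k ∈ Icc 1 (n - 1), c k * cos (2 * π * k * (j / (2 * n)))) =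
      n * (1 + cos (π / n)) - n * c 1 := by
  have hconst : ∑ j ∈ range (2 * n), fejerWeight n (j / (2 * n)) = n * (1 + cos (π / n)) := by
    simpa using sum_fejerWeight_mul_cos (n := n) (k := 0) (by omega)
  have hcoeff (k : ℕ) (hk : k ∈ Icc 1 (n - 1)) :
      ∑ j ∈ range (2 * n), fejerWeight n (j / (2 * n)) * (c k * cos (2 * π * k * (j / (2 * n)))) =
        if k = 1 then -(n * c 1) else 0 := by
    have hk' := mem_Icc.mp hk
    simp_rw [mul_left_comm _ (c k), ← mul_sum, sum_fejerWeight_mul_cos (by omega : k < n),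
      if_neg (by omega : k ≠ 0)]
    split_ifs with h
    · subst h; ring
    · ring
  simp only [mul_add, mul_one, mul_sum, sum_add_distrib, hconst]
  rw [sum_comm, sum_congr rfl hcoeff, sum_ite_eq' (Icc 1 (n - 1)) 1, if_pos (by simp; omega)]
  ring

/-- Discretized Fejér bound: if `m = 2n` and
`φ(t) = 1 + ∑_{k=1}^{n-1} c_k cos(2πkt)` satisfies `φ(j/m) ≥ 0` for all
integers `j`, then `c_1 ≤ 1 + cos(π/n)`. -/
theorem discrete_fejer_bound (n : ℕ) (hn : 2 ≤ n) (c : ℕ → ℝ)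
    (hpos : ∀ j : ℤ, 0 ≤ 1 +
      ∑ k ∈ Finset.Icc 1 (n - 1), c k * Real.cos (2 * π * k * (j / (2 * n : ℝ)))) :
    c 1 ≤ 1 + Real.cos (π / n) := by
  have hpairing : 0 ≤ ∑ j ∈ range (2 * n), fejerWeight n (j / (2 * n)) *
      (1 + ∑ k ∈ Icc 1 (n - 1), c k * cos (2 * π * k * (j / (2 * n)))) :=
    sum_nonneg fun j hj => mul_nonneg (fejerWeight_nonneg (mem_range.mp hj))
      (by simpa only [Int.cast_natCast] using hpos j)
  rw [sum_fejerWeight_mul_trigPoly hn c] at hpairing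
  have hn' : (0 : ℝ) < n := by exact_mod_cast (by omega : 0 < n)
  nlinarith
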